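/- arXiv:1404.4674 — 2 statements merged into one kernel-verified Lean document; each statement's English description precedes it below -/
import Mathlib

section
/- For every n ≥ 1 and every permutation w of {1,…,n}, dep(w) ≤ ⌊n²/4⌋, and there exists a permutation w of {1,…,n} with dep(w) = ⌊n²/4⌋. -/
/-!
Write `w i - i` (truncated) as the number of cuts `k` with `i ≤ k < w i`, so that the depth is the
sum over the cuts `k < n` of the number of positions crossing the cut. Positions crossing cut `k`
lie in `[0, k]` and, by injectivity, are sent to distinct values in `(k, n)`; hence at most
`min (k + 1) (n - 1 - k)` of them cross, and these minima add up to `⌊n² / 4⌋`. The reversal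
`i ↦ n - 1 - i` attains the bound at every cut.
-/

/-- The depth of a permutation `w` of `{1,…,n}`:
`dep(w) = ∑_{i : w(i) > i} (w(i) - i)`. -/
def dep {n : ℕ} (w : Equiv.Perm (Fin n)) : ℕ :=
  ∑ i ∈ Finset.univ.filter (fun i : Fin n => i < w i), ((w i : ℕ) - (i : ℕ))

open Finset

theorem sum_range_min_succ_tsub :
    ∀ n : ℕ, ∑ k ∈ range n, min (k + 1) (n - 1 - k) = n ^ 2 / 4
  | 0 => by simp
  | 1 => by simp
  | n + 2 => by
    have hstep : ∑ k ∈ range (n + 2), min (k + 1) (n + 2 - 1 - k)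
        = ∑ k ∈ range n, min (k + 1) (n - 1 - k) + (n + 1) := by
      rw [sum_range_succ', sum_range_succ]
      have hmid : ∀ k ∈ range n,
          min (k + 1 + 1) (n + 2 - 1 - (k + 1)) = min (k + 1) (n - 1 - k) + 1 := by
        intro k hk
        simp only [mem_range] at hk
        omega
      rw [sum_congr rfl hmid, sum_add_distrib, sum_const, card_range, smul_eq_mul, mul_one]
      omega
    rw [hstep, sum_range_min_succ_tsub n]
    have hsq : (n + 2) ^ 2 = n ^ 2 + 4 * (n + 1) := by ring
    omega

section Crossing

variable {n : ℕ}

def crossing (f : Fin n → Fin n) (k : ℕ) : Finset (Fin n) :=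
  {i | (i : ℕ) ≤ k ∧ k < f i}

lemma dep_eq_sum_tsub (w : Equiv.Perm (Fin n)) : dep w = ∑ i, ((w i : ℕ) - i) := by
  refine sum_subset (filter_subset _ _) fun i _ hi => ?_
  simp only [mem_filter, mem_univ, true_and, Fin.lt_def, not_lt] at hi
  omega

lemma sum_tsub_eq_sum_card_crossing (f : Fin n → Fin n) :
    ∑ i, ((f i : ℕ) - i) = ∑ k ∈ range n, #(crossing f k) := by
  have hcount : ∀ i : Fin n, (f i : ℕ) - i = #{k ∈ range n | (i : ℕ) ≤ k ∧ k < f i} := by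
    intro i
    have hIco : {k ∈ range n | (i : ℕ) ≤ k ∧ k < f i} = Ico (i : ℕ) (f i) := by
      ext k
      simp only [mem_filter, mem_range, mem_Ico]
      have := (f i).isLt
      omega
    rw [hIco, Nat.card_Ico]
  simp only [hcount, card_filter, crossing]
  exact sum_comm

lemma card_crossing_le {f : Fin n → Fin n} (hf : Function.Injective f) {k : ℕ} (hk : k < n) :
    #(crossing f k) ≤ min (k + 1) (n - 1 - k) := by
  have hsource : #(crossing f k) ≤ #(range (k + 1)) := by
    refine card_le_card_of_injOn (fun i => (i : ℕ)) (fun i hi => ?_) Fin.val_injective.injOn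
    simp only [crossing, coe_filter, mem_univ, true_and, Set.mem_ofPred_eq] at hi
    simp only [coe_range, Set.mem_Iio]
    omega
  have htarget : #(crossing f k) ≤ #(Ico (k + 1) n) := by
    refine card_le_card_of_injOn (fun i => (f i : ℕ)) (fun i hi => ?_)
      (Fin.val_injective.comp hf).injOn
    simp only [crossing, coe_filter, mem_univ, true_and, Set.mem_ofPred_eq] at hi
    simp only [coe_Ico, Set.mem_Ico]
    exact ⟨hi.2, (f i).isLt⟩
  rw [card_range] at hsource
  rw [Nat.card_Ico] at htarget
  omega

lemma card_crossing_rev {k : ℕ} (hk : k < n) :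
    #(crossing (Fin.rev : Fin n → Fin n) k) = min (k + 1) (n - 1 - k) := by
  have hcut : crossing (Fin.rev : Fin n → Fin n) k
      = ({i | (i : ℕ) < min (k + 1) (n - 1 - k)} : Finset (Fin n)) := by
    ext i
    simp only [crossing, mem_filter, mem_univ, true_and, Fin.val_rev]
    omega
  rw [hcut, Fin.card_filter_val_lt]
  omega

end Crossing

theorem dep_le_and_attained_general (n : ℕ) :
    (∀ w : Equiv.Perm (Fin n), dep w ≤ n ^ 2 / 4) ∧
    (∃ w : Equiv.Perm (Fin n), dep w = n ^ 2 / 4) := by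
  refine ⟨fun w => ?_, ⟨Fin.revPerm, ?_⟩⟩
  · rw [dep_eq_sum_tsub, sum_tsub_eq_sum_card_crossing, ← sum_range_min_succ_tsub]
    exact sum_le_sum fun k hk => card_crossing_le w.injective (mem_range.mp hk)
  · rw [dep_eq_sum_tsub, sum_tsub_eq_sum_card_crossing, ← sum_range_min_succ_tsub]
    exact sum_congr rfl fun k hk => card_crossing_rev (mem_range.mp hk)

/-- For every `n ≥ 1`, every permutation `w` of `{1,…,n}` satisfies
`dep(w) ≤ ⌊n²/4⌋`, and some permutation attains this bound. -/
theorem dep_le_and_attained (n : ℕ) (hn : 1 ≤ n) :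
    (∀ w : Equiv.Perm (Fin n), dep w ≤ n ^ 2 / 4) ∧
    (∃ w : Equiv.Perm (Fin n), dep w = n ^ 2 / 4) :=
  dep_le_and_attained_general n
end

section
/- For every fixed k ≥ 0 there exists a polynomial P_k with rational coefficients of degree k such that for all n ≥ k, the number of permutations w of {1,…,n} with dep(w) = k equals P_k(n). -/
/-!
Cutting a permutation after its first indecomposable block writes it as a direct sum `u ⊕ v`,
and depth is additive. An indecomposable block of size `b` has depth at least `b - 1`, since
each of its `b - 1` inner cuts `j` is crossed by some `i < j ≤ w i`. Hence, with `a(b,d)` the number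
of indecomposable permutations of size `b` and depth `d`, for `n ≥ k` the number `c_k(n)` of
permutations of depth `k` satisfies `c_k(n+1) - c_k(n) = ∑ a(b,d) c_{k-d}(n+1-b)` over depths
`d ≥ 1` and block sizes `b ≤ d + 1`, where by induction the counts on the right are
polynomials in `n` of degree `k - d`. The only indecomposable permutation of depth `1` is the
transposition of `Fin 2`, so the difference is a polynomial of degree exactly `k - 1`, and a
discrete antiderivative (built from falling factorials) makes `c_k` a polynomial of degree `k`.
-/

open Finset Equiv Polynomial

namespace Polynomial

lemma taylor_one_descPochhammer_succ_sub {R : Type*} [CommRing R] (n : ℕ) :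
    taylor 1 (descPochhammer R (n + 1)) - descPochhammer R (n + 1) =
      (n + 1 : R[X]) * descPochhammer R n := by
  have hshift : taylor 1 (descPochhammer R (n + 1)) = (X + 1) * descPochhammer R n := by
    rw [descPochhammer_succ_left, taylor_apply, mul_comp, comp_assoc]
    simp
  rw [hshift, descPochhammer_succ_right]
  ring

lemma degree_taylor_sub_lt {R : Type*} [Ring R] {p : R[X]} (hp : p ≠ 0) (r : R) :
    (taylor r p - p).degree < p.degree := by
  have hne : taylor r p ≠ 0 := fun h => hp (by simpa using congrArg (taylor (-r)) h)
  simpa [degree_taylor] using degree_sub_lt_left (degree_taylor p r) hne (leadingCoeff_taylor _ _)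

variable {K : Type*} [Field K] [CharZero K]

lemma exists_taylor_one_sub_eq_of_degree_lt (N : ℕ) {p : K[X]} (hp : p.degree < N) :
    ∃ q : K[X], taylor 1 q - q = p ∧ q.degree ≤ N := by
  induction N generalizing p with
  | zero => exact ⟨0, by simp_all, by simp⟩
  | succ N ih =>
    rcases eq_or_ne p 0 with rfl | hp0
    · exact ⟨0, by simp, by simp⟩
    set m := p.natDegree
    set c := p.leadingCoeff
    have hc : c ≠ 0 := leadingCoeff_ne_zero.mpr hp0
    have hm : m ≤ N := by
      rw [degree_eq_natDegree hp0] at hp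
      exact Nat.lt_succ_iff.mp (by exact_mod_cast hp)
    set t := C (c / (m + 1)) * descPochhammer K (m + 1)
    have ht : taylor 1 t - t = C c * descPochhammer K m := by
      have hm1 : (m + 1 : K) ≠ 0 := by exact_mod_cast m.succ_ne_zero
      rw [taylor_mul, taylor_C, ← mul_sub, taylor_one_descPochhammer_succ_sub, ← mul_assoc]
      congr 1
      rw [show (m + 1 : K[X]) = C (m + 1 : K) by simp, ← C_mul, div_mul_cancel₀ _ hm1]
    have hlow : (p - C c * descPochhammer K m).degree < N := by
      have hdeg : p.degree = (C c * descPochhammer K m).degree := by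
        rw [degree_C_mul hc, degree_eq_natDegree (monic_descPochhammer K m).ne_zero,
          descPochhammer_natDegree, degree_eq_natDegree hp0]
      have hlc : p.leadingCoeff = (C c * descPochhammer K m).leadingCoeff := by
        rw [leadingCoeff_mul, leadingCoeff_C, (monic_descPochhammer K m).leadingCoeff, mul_one]
      refine (degree_sub_lt_left hdeg hp0 hlc).trans_le ?_
      rw [degree_eq_natDegree hp0]
      exact_mod_cast hm
    obtain ⟨q, hq, hqdeg⟩ := ih hlow
    refine ⟨q + t, ?_, ?_⟩
    · rw [map_add, add_sub_add_comm, hq, ht, sub_add_cancel]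
    · refine (degree_add_le _ _).trans (max_le (hqdeg.trans (by exact_mod_cast N.le_succ)) ?_)
      exact degree_le_of_natDegree_le ((natDegree_C_mul_le _ _).trans (by simpa using hm))

lemma exists_taylor_one_sub_eq_of_degree_eq {m : ℕ} {p : K[X]} (hp : p.degree = m) :
    ∃ q : K[X], taylor 1 q - q = p ∧ q.degree = (m + 1 : ℕ) := by
  obtain ⟨q, hq, hqdeg⟩ := exists_taylor_one_sub_eq_of_degree_lt (m + 1) (p := p) (by
    rw [hp]; exact_mod_cast m.lt_succ_self)
  have hq0 : q ≠ 0 := by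
    rintro rfl
    simp [← hq] at hp
  refine ⟨q, hq, ?_⟩
  have hlt := degree_taylor_sub_lt hq0 1
  rw [hq, hp, degree_eq_natDegree hq0] at hlt
  rw [degree_eq_natDegree hq0] at hqdeg ⊢
  norm_cast at hlt hqdeg ⊢
  omega

end Polynomial

theorem exists_degree_eq_forall_eval_of_eval_succ {K : Type*} [Field K] [CharZero K]
    {f : ℕ → K} {n₀ m : ℕ} {p : K[X]} (hp : p.degree = m)
    (hf : ∀ n, n₀ ≤ n → f (n + 1) = f n + p.eval (n : K)) :
    ∃ q : K[X], q.degree = (m + 1 : ℕ) ∧ ∀ n, n₀ ≤ n → f n = q.eval (n : K) := by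
  obtain ⟨q, hq, hqdeg⟩ := exists_taylor_one_sub_eq_of_degree_eq hp
  refine ⟨q + C (f n₀ - q.eval (n₀ : K)), ?_, fun n hn => ?_⟩
  · rw [degree_add_C (by rw [hqdeg]; exact_mod_cast Nat.succ_pos m), hqdeg]
  induction n, hn using Nat.le_induction with
  | base => simp
  | succ n hn ih =>
    have hstep := congrArg (eval (n : K)) hq
    simp only [eval_sub, taylor_eval] at hstep
    simp only [hf n hn, ih, eval_add, eval_C, Nat.cast_succ, ← hstep]
    ring

section Blocks

variable {n b m : ℕ}

lemma dep_eq_sum (w : Perm (Fin n)) : dep w = ∑ i, ((w i : ℕ) - i) := by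
  rw [dep, sum_filter]
  refine sum_congr rfl fun i _ => ?_
  split_ifs with h
  · rfl
  · exact (Nat.sub_eq_zero_of_le (not_lt.mp h)).symm

def IsInvariantPrefix (w : Perm (Fin n)) (j : ℕ) : Prop :=
  ∀ i : Fin n, (i : ℕ) < j → (w i : ℕ) < j

instance (w : Perm (Fin n)) (j : ℕ) : Decidable (IsInvariantPrefix w j) :=
  Fintype.decidableForallFintype

def Indecomposable (w : Perm (Fin n)) : Prop :=
  ∀ j, 0 < j → j < n → ¬ IsInvariantPrefix w j

instance (w : Perm (Fin n)) : Decidable (Indecomposable w) :=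
  decidable_of_iff (∀ j < n, 0 < j → ¬ IsInvariantPrefix w j)
    ⟨fun h j h0 hn => h j hn h0, fun h j hn h0 => h j h0 hn⟩

lemma isInvariantPrefix_of_le (w : Perm (Fin n)) {j : ℕ} (hj : n ≤ j) : IsInvariantPrefix w j :=
  fun i _ => (w i).isLt.trans_le hj

lemma dep_eq_sum_card_crossing (w : Perm (Fin n)) :
    dep w = ∑ j ∈ range n, #{i : Fin n | (i : ℕ) < j ∧ j ≤ w i} := by
  have hcross (i : Fin n) : (w i : ℕ) - i = #{j ∈ range n | (i : ℕ) < j ∧ j ≤ w i} := by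
    rw [← Nat.card_Ioc]
    congr 1
    ext j
    simp only [mem_Ioc, mem_filter, mem_range]
    have := (w i).isLt
    omega
  simp only [dep_eq_sum, hcross, card_filter]
  exact sum_comm

lemma Indecomposable.le_dep_add_one {w : Perm (Fin n)} (hw : Indecomposable w) :
    n ≤ dep w + 1 := by
  have hcross : ∀ j ∈ Ico 1 n, 1 ≤ #{i : Fin n | (i : ℕ) < j ∧ j ≤ w i} := by
    intro j hj
    rw [mem_Ico] at hj
    obtain ⟨i, hi, hwi⟩ : ∃ i : Fin n, (i : ℕ) < j ∧ ¬ (w i : ℕ) < j := by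
      simpa [IsInvariantPrefix] using hw j hj.1 hj.2
    exact card_pos.mpr ⟨i, by simp [hi, not_lt.mp hwi]⟩
  calc n ≤ #(Ico 1 n) + 1 := by simp; omega
    _ ≤ ∑ j ∈ Ico 1 n, #{i : Fin n | (i : ℕ) < j ∧ j ≤ w i} + 1 := by
      simpa using sum_le_sum hcross
    _ ≤ dep w + 1 := by
      rw [dep_eq_sum_card_crossing]
      gcongr
      exact fun j hj => by rw [mem_Ico] at hj; rw [mem_range]; omega

def blockSum (u : Perm (Fin b)) (v : Perm (Fin m)) : Perm (Fin (b + m)) :=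
  finSumFinEquiv.permCongr (u.sumCongr v)

@[simp]
lemma blockSum_castAdd (u : Perm (Fin b)) (v : Perm (Fin m)) (i : Fin b) :
    blockSum u v (Fin.castAdd m i) = Fin.castAdd m (u i) := by
  simp [blockSum, permCongr_apply]

@[simp]
lemma blockSum_natAdd (u : Perm (Fin b)) (v : Perm (Fin m)) (i : Fin m) :
    blockSum u v (Fin.natAdd b i) = Fin.natAdd b (v i) := by
  simp [blockSum, permCongr_apply]

lemma blockSum_injective :
    Function.Injective fun p : Perm (Fin b) × Perm (Fin m) => blockSum p.1 p.2 :=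
  (finSumFinEquiv.permCongr.injective).comp Perm.sumCongrHom_injective

lemma dep_blockSum (u : Perm (Fin b)) (v : Perm (Fin m)) :
    dep (blockSum u v) = dep u + dep v := by
  simp only [dep_eq_sum, Fin.sum_univ_add, blockSum_castAdd, blockSum_natAdd, Fin.val_castAdd,
    Fin.val_natAdd, Nat.add_sub_add_left]

lemma isInvariantPrefix_blockSum_iff (u : Perm (Fin b)) (v : Perm (Fin m)) {j : ℕ}
    (hj : j ≤ b) :
    IsInvariantPrefix (blockSum u v) j ↔ IsInvariantPrefix u j := by
  refine ⟨fun h i hi => by simpa using h (Fin.castAdd m i) hi, fun h i hi => ?_⟩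
  induction i using Fin.addCases with
  | left i => simpa using h i hi
  | right i => simp at hi; omega

lemma exists_blockSum_eq {w : Perm (Fin (b + m))} (hw : IsInvariantPrefix w b) :
    ∃ u v, blockSum u v = w := by
  have hmaps : Set.MapsTo (finSumFinEquiv.symm.permCongr w) (Set.range Sum.inl)
      (Set.range Sum.inl) := by
    rintro _ ⟨i, rfl⟩
    obtain ⟨j, hj⟩ : ∃ j : Fin b, Fin.castAdd m j = w (Fin.castAdd m i) :=
      ⟨⟨_, hw (Fin.castAdd m i) i.isLt⟩, rfl⟩
    exact ⟨j, by simp [permCongr_apply, ← hj]⟩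
  obtain ⟨⟨u, v⟩, huv⟩ := Perm.mem_sumCongrHom_range_of_perm_mapsTo_inl hmaps
  refine ⟨u, v, ?_⟩
  rw [Perm.sumCongrHom_apply] at huv
  rw [blockSum, huv, ← permCongr_symm, apply_symm_apply]

lemma exists_isInvariantPrefix (w : Perm (Fin n)) : ∃ j, 0 < j ∧ IsInvariantPrefix w j :=
  ⟨n + 1, n.succ_pos, isInvariantPrefix_of_le w n.le_succ⟩

def firstBlockLen (w : Perm (Fin n)) : ℕ := Nat.find (exists_isInvariantPrefix w)

lemma firstBlockLen_mem_Icc (hn : 0 < n) (w : Perm (Fin n)) : firstBlockLen w ∈ Icc 1 n :=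
  mem_Icc.mpr ⟨(Nat.find_spec (exists_isInvariantPrefix w)).1,
    Nat.find_min' _ ⟨hn, isInvariantPrefix_of_le w le_rfl⟩⟩

lemma isInvariantPrefix_firstBlockLen (w : Perm (Fin n)) : IsInvariantPrefix w (firstBlockLen w) :=
  (Nat.find_spec (exists_isInvariantPrefix w)).2

lemma firstBlockLen_blockSum_eq_iff (hb : 0 < b) (u : Perm (Fin b)) (v : Perm (Fin m)) :
    firstBlockLen (blockSum u v) = b ↔ Indecomposable u := by
  rw [firstBlockLen, Nat.find_eq_iff]
  have hbInv : IsInvariantPrefix (blockSum u v) b :=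
    (isInvariantPrefix_blockSum_iff u v le_rfl).mpr (isInvariantPrefix_of_le u le_rfl)
  refine ⟨fun h j hj hjb hInv => h.2 j hjb ⟨hj, ?_⟩, fun hu => ⟨⟨hb, hbInv⟩, ?_⟩⟩
  · exact (isInvariantPrefix_blockSum_iff u v hjb.le).mpr hInv
  · rintro j hjb ⟨hj, hInv⟩
    exact hu j hj hjb ((isInvariantPrefix_blockSum_iff u v hjb.le).mp hInv)

end Blocks

lemma card_filter_add_eq {α β : Type*} (s : Finset α) (t : Finset β) (f : α → ℕ) (g : β → ℕ)
    (k : ℕ) :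
    #{p ∈ s ×ˢ t | f p.1 + g p.2 = k} =
      ∑ d ∈ range (k + 1), #{a ∈ s | f a = d} * #{c ∈ t | g c = k - d} := by
  rw [card_eq_sum_card_fiberwise (f := fun p => f p.1) (t := range (k + 1)) (fun p hp => by
    simp only [coe_filter, Set.mem_ofPred_eq] at hp
    simp only [coe_range, Set.mem_Iio]
    omega)]
  refine sum_congr rfl fun d hd => ?_
  rw [← card_product, filter_filter]
  congr 1
  ext ⟨a, c⟩
  simp only [mem_filter, mem_product, mem_range] at hd ⊢
  constructor
  · rintro ⟨⟨ha, hc⟩, hk, rfl⟩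
    exact ⟨⟨ha, rfl⟩, hc, by omega⟩
  · rintro ⟨⟨ha, rfl⟩, hc, hk⟩
    exact ⟨⟨ha, hc⟩, by omega, rfl⟩

def depCount (k n : ℕ) : ℕ := #{w : Perm (Fin n) | dep w = k}

def indecDepCount (b d : ℕ) : ℕ := #{u : Perm (Fin b) | Indecomposable u ∧ dep u = d}

lemma card_filter_firstBlockLen_eq {b m : ℕ} (hb : 0 < b) (k : ℕ) :
    #{w : Perm (Fin (b + m)) | dep w = k ∧ firstBlockLen w = b} =
      ∑ d ∈ range (k + 1), indecDepCount b d * depCount (k - d) m := by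
  have himage : ({w | dep w = k ∧ firstBlockLen w = b} : Finset (Perm (Fin (b + m)))) =
      {p ∈ ({u | Indecomposable u} : Finset (Perm (Fin b))) ×ˢ (univ : Finset (Perm (Fin m))) |
        dep p.1 + dep p.2 = k}.image fun p => blockSum p.1 p.2 := by
    ext w
    simp only [mem_filter, mem_univ, and_true, true_and, mem_image, mem_product, Prod.exists]
    constructor
    · rintro ⟨hdep, hfb⟩
      obtain ⟨u, v, rfl⟩ := exists_blockSum_eq (hfb ▸ isInvariantPrefix_firstBlockLen w)
      exact ⟨u, v, ⟨(firstBlockLen_blockSum_eq_iff hb u v).mp hfb, dep_blockSum u v ▸ hdep⟩,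
        rfl⟩
    · rintro ⟨u, v, ⟨hu, hdep⟩, rfl⟩
      exact ⟨dep_blockSum u v ▸ hdep, (firstBlockLen_blockSum_eq_iff hb u v).mpr hu⟩
  rw [himage, card_image_of_injective _ blockSum_injective, card_filter_add_eq]
  simp only [filter_filter]
  rfl

lemma depCount_eq_sum {n : ℕ} (hn : 0 < n) (k : ℕ) :
    depCount k n =
      ∑ b ∈ Icc 1 n, ∑ d ∈ range (k + 1), indecDepCount b d * depCount (k - d) (n - b) := by
  rw [depCount, card_eq_sum_card_fiberwise (f := firstBlockLen) (t := Icc 1 n)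
    fun w _ => firstBlockLen_mem_Icc hn w]
  refine sum_congr rfl fun b hb => ?_
  obtain ⟨hb0, hbn⟩ := mem_Icc.mp hb
  obtain ⟨m, rfl⟩ := Nat.exists_eq_add_of_le hbn
  rw [filter_filter, Nat.add_sub_cancel_left]
  exact card_filter_firstBlockLen_eq hb0 k

lemma indecDepCount_eq_zero {b d : ℕ} (h : d + 1 < b) : indecDepCount b d = 0 := by
  rw [indecDepCount, card_eq_zero, filter_eq_empty_iff]
  rintro u - ⟨hu, rfl⟩
  have := hu.le_dep_add_one
  omega

lemma depCount_succ_of_le {k n : ℕ} (hn : k ≤ n) :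
    depCount k (n + 1) = depCount k n + ∑ d ∈ range k, ∑ b ∈ Icc 1 (d + 2),
      indecDepCount b (d + 1) * depCount (k - (d + 1)) (n + 1 - b) := by
  have hshort : ∀ d ∈ range (k + 1),
      ∑ b ∈ Icc 1 (n + 1), indecDepCount b d * depCount (k - d) (n + 1 - b) =
        ∑ b ∈ Icc 1 (d + 1), indecDepCount b d * depCount (k - d) (n + 1 - b) := by
    intro d hd
    rw [mem_range] at hd
    refine (sum_subset (Icc_subset_Icc_right (by omega)) fun b hb hb' => ?_).symm
    rw [mem_Icc] at hb hb'
    rw [indecDepCount_eq_zero (by omega), zero_mul]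
  rw [depCount_eq_sum n.succ_pos, sum_comm, sum_congr rfl hshort, sum_range_succ', add_comm]
  have h10 : indecDepCount 1 0 = 1 := by decide
  simp [h10]

lemma depCount_zero (n : ℕ) : depCount 0 n = 1 := by
  induction n with
  | zero => decide
  | succ n ih => simp [depCount_succ_of_le n.zero_le, ih]

noncomputable def depIncrement (Q : ℕ → ℚ[X]) (k : ℕ) : ℚ[X] :=
  ∑ d ∈ range k, ∑ b ∈ Icc 1 (d + 2),
    indecDepCount b (d + 1) • taylor (1 - b : ℚ) (Q (k - (d + 1)))

lemma depCount_succ_eq_add_eval {Q : ℕ → ℚ[X]} {k n : ℕ}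
    (hQ : ∀ j < k, ∀ n, j ≤ n → (depCount j n : ℚ) = (Q j).eval (n : ℚ)) (hn : k ≤ n) :
    (depCount k (n + 1) : ℚ) = depCount k n + (depIncrement Q k).eval (n : ℚ) := by
  rw [depCount_succ_of_le hn, depIncrement, Nat.cast_add]
  congr 1
  simp only [Nat.cast_sum, eval_finsetSum]
  refine sum_congr rfl fun d hd => sum_congr rfl fun b hb => ?_
  rw [mem_range] at hd
  rw [mem_Icc] at hb
  rw [eval_smul, taylor_eval, nsmul_eq_mul, Nat.cast_mul, hQ _ (by omega) _ (by omega),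
    Nat.cast_sub (by omega)]
  push_cast
  ring_nf

lemma degree_depIncrement {Q : ℕ → ℚ[X]} {K : ℕ} (hQ : ∀ j ≤ K, (Q j).degree = j) :
    (depIncrement Q (K + 1)).degree = K := by
  have h11 : indecDepCount 1 1 = 0 := by decide
  have h21 : indecDepCount 2 1 = 1 := by decide
  have hlead : ∑ b ∈ Icc 1 (0 + 2), indecDepCount b (0 + 1) •
      taylor (1 - b : ℚ) (Q (K + 1 - (0 + 1))) = taylor (-1) (Q K) := by
    rw [show Icc 1 (0 + 2) = {1, 2} from rfl, sum_pair (by norm_num), h11, h21]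
    norm_num
  have hrest : (∑ d ∈ range K, ∑ b ∈ Icc 1 (d + 1 + 2), indecDepCount b (d + 1 + 1) •
      taylor (1 - b : ℚ) (Q (K + 1 - (d + 1 + 1)))).degree < K := by
    refine (degree_sum_le _ _).trans_lt
      ((Finset.sup_lt_iff (WithBot.bot_lt_coe K)).mpr fun d hd => ?_)
    refine (degree_sum_le _ _).trans_lt
      ((Finset.sup_lt_iff (WithBot.bot_lt_coe K)).mpr fun b _ => ?_)
    rw [mem_range] at hd
    refine (degree_smul_le _ _).trans_lt ?_
    rw [degree_taylor, hQ _ (by omega)]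
    exact Nat.cast_lt.mpr (by omega)
  have htop : (taylor (-1) (Q K)).degree = K := by rw [degree_taylor, hQ K le_rfl]
  rw [depIncrement, sum_range_succ', hlead, degree_add_eq_right_of_degree_lt (htop ▸ hrest), htop]

/-- For every fixed `k ≥ 0` there is a polynomial `P_k` with rational
coefficients of degree `k` such that for all `n ≥ k`, the number of
permutations `w` of `{1,…,n}` with `dep(w) = k` equals `P_k(n)`. -/
theorem card_depth_eq_polynomial (k : ℕ) :
    ∃ P : Polynomial ℚ, P.degree = (k : WithBot ℕ) ∧
      ∀ n : ℕ, k ≤ n →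
        (((Finset.univ.filter (fun w : Equiv.Perm (Fin n) => dep w = k)).card : ℚ)
          = P.eval (n : ℚ)) := by
  induction k using Nat.strong_induction_on with
  | _ k ih =>
  obtain _ | K := k
  · refine ⟨C 1, by simp, fun n _ => ?_⟩
    change (depCount 0 n : ℚ) = _
    simp [depCount_zero]
  choose! Q hQdeg hQeval using ih
  exact exists_degree_eq_forall_eval_of_eval_succ
    (degree_depIncrement fun j hj => hQdeg j (Nat.lt_succ_of_le hj))
    fun n hn => depCount_succ_eq_add_eval hQeval hn
end
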